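/- arXiv:1605.07082 — 2 statements merged into one kernel-verified Lean document; each statement's English description precedes it below -/
import Mathlib

section
/- Let t be a positive integer, Γ₁ and Γ₂ groups, (G,γ) a (Γ₁⊕Γ₂)-labeled simple graph, and S ⊆ V(G). If G contains 3t pairwise vertex-disjoint Γ₁-non-zero S-paths and t pairwise vertex-disjoint Γ₂-non-zero S-paths, then G contains 2t pairwise vertex-disjoint S-paths P₁, …, P_{2t} such that Pᵢ is Γ₁-non-zero for all i ≤ t and Pᵢ is Γ₂-non-zero for all t < i ≤ 2t. -/
open SimpleGraph

/-- The group-value of a walk in a group-labeled graph. -/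
def walkVal {V Γ : Type} [Group Γ] {G : SimpleGraph V} (γ : V → V → Γ)
    {u v : V} (w : G.Walk u v) : Γ :=
  (w.darts.map fun d => γ d.toProd.1 d.toProd.2).prod

/-- `γ` is a labeling of the simple graph `G`. -/
def IsLab {V Γ : Type} [Group Γ] (G : SimpleGraph V) (γ : V → V → Γ) : Prop :=
  ∀ u v : V, G.Adj u v → γ v u = (γ u v)⁻¹

/-- An `S`-path: a path with at least one edge, both endpoints in `S`, and no internal
vertex in `S`. -/
def IsAPath {V : Type} {G : SimpleGraph V} (S : Set V) {u v : V} (p : G.Walk u v) : Prop :=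
  p.IsPath ∧ 1 ≤ p.length ∧ u ∈ S ∧ v ∈ S ∧ ∀ x ∈ p.support, x ∈ S → x = u ∨ x = v

/-!
Let `Q` be the `3t` disjoint `Γ₁`-non-zero `S`-paths. Among all families of `t` disjoint
`Γ₂`-non-zero `S`-paths choose one, `P`, with the fewest edges outside the paths of `Q`.
Then every `Qᵢ` meeting `P` has an endpoint on `P`. Otherwise, walk along `Qᵢ` from its
start `a` to the first vertex `u` on some `Pⱼ = X · Y` (split at `u`); `u ∉ S`, and since
`γ(X) γ(Y) ≠ 1`, one of `X · Qᵢ[u, a]` and `(reverse Y) · Qᵢ[u, a]` is a `Γ₂`-non-zero `S`-path.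
Replacing `Pⱼ` by it removes the other half of `Pⱼ`, which must use an edge outside `Q`: a
walk along edges of the disjoint paths `Q` never leaves the `Qᵢ` it starts on, while the
half ends at an endpoint of `Pⱼ`, a vertex of `S` on `P` and hence not on `Qᵢ`.
So each `Qᵢ` meeting `P` contains one of the `2t` endpoints of `P`, at least `t` paths of
`Q` avoid `P`, and these together with `P` are the required family.
-/

section walkVal

variable {V Γ : Type} [Group Γ] {G : SimpleGraph V} {γ : V → V → Γ}

@[simp]
lemma walkVal_nil (u : V) : walkVal γ (Walk.nil : G.Walk u u) = 1 := rfl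

@[simp]
lemma walkVal_cons {u v w : V} (h : G.Adj u v) (p : G.Walk v w) :
    walkVal γ (Walk.cons h p) = γ u v * walkVal γ p := by
  simp [walkVal]

lemma walkVal_append {u v w : V} (p : G.Walk u v) (q : G.Walk v w) :
    walkVal γ (p.append q) = walkVal γ p * walkVal γ q := by
  simp [walkVal, Walk.darts_append]

lemma walkVal_reverse (hγ : IsLab G γ) {u v : V} (p : G.Walk u v) :
    walkVal γ p.reverse = (walkVal γ p)⁻¹ := by
  induction p with
  | nil => simp
  | cons h p ih => simp [Walk.reverse_cons, walkVal_append, ih, hγ _ _ h]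

lemma walkVal_append_ne_one_or (hγ : IsLab G γ) {c u d a : V} (T : G.Walk c u)
    (R : G.Walk u d) (π : G.Walk u a) (h : walkVal γ (T.append R) ≠ 1) :
    walkVal γ (T.append π) ≠ 1 ∨ walkVal γ (R.reverse.append π) ≠ 1 := by
  contrapose! h
  simp only [walkVal_append, walkVal_reverse hγ, inv_mul_eq_one] at h
  rw [walkVal_append, eq_inv_of_mul_eq_one_left h.1, h.2, inv_mul_cancel]

lemma IsLab.snd {Γ' : Type} [Group Γ'] {γ : V → V → Γ × Γ'} (hγ : IsLab G γ) :
    IsLab G fun x y => (γ x y).2 :=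
  fun u v h => congrArg Prod.snd (hγ u v h)

end walkVal

namespace SimpleGraph.Walk

variable {V : Type} {G : SimpleGraph V}

lemma exists_takeUntil_first [DecidableEq V] {s : Set V} :
    ∀ {u v : V} (p : G.Walk u v), (∃ x ∈ p.support, x ∈ s) →
      ∃ x, ∃ hx : x ∈ p.support, x ∈ s ∧ ∀ y ∈ (p.takeUntil x hx).support, y ∈ s → y = x
  | _, _, nil, ⟨x, hx, hxs⟩ => by
    rw [mem_support_nil_iff] at hx
    subst hx
    exact ⟨x, start_mem_support _, hxs, by simp⟩
  | u, _, cons h p, ⟨x, hx, hxs⟩ => by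
    by_cases hu : u ∈ s
    · exact ⟨u, start_mem_support _, hu, by simp⟩
    · have hxp : x ∈ p.support := by
        rcases List.mem_cons.mp hx with rfl | hx
        · exact absurd hxs hu
        · exact hx
      obtain ⟨y, hy, hys, hfirst⟩ := exists_takeUntil_first p ⟨x, hxp, hxs⟩
      have huy : u ≠ y := fun huy => hu (huy ▸ hys)
      refine ⟨y, List.mem_of_mem_tail hy, hys, ?_⟩
      rw [takeUntil_cons hy huy h]
      rintro z hz hzs
      rcases List.mem_cons.mp hz with rfl | hz
      · exact absurd hzs hu
      · exact hfirst z hz hzs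

lemma IsPath.append {u v w : V} {p : G.Walk u v} {q : G.Walk v w} (hp : p.IsPath)
    (hq : q.IsPath) (hpq : ∀ x ∈ p.support, x ∈ q.support → x = v) : (p.append q).IsPath := by
  have hq' := hq.support_nodup
  rw [← cons_tail_support] at hq'
  rw [isPath_def, support_append, List.nodup_append]
  refine ⟨hp.support_nodup, (List.nodup_cons.mp hq').2, fun x hx y hy hxy => ?_⟩
  subst hxy
  have hxv := hpq x hx (List.mem_of_mem_tail hy)
  subst hxv
  exact (List.nodup_cons.mp hq').1 hy

end SimpleGraph.Walk

section SPaths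

variable {V : Type} {G : SimpleGraph V} {S : Set V}

lemma IsAPath.reverse {u v : V} {p : G.Walk u v} (hp : IsAPath S p) : IsAPath S p.reverse := by
  obtain ⟨hpath, hlen, hu, hv, hint⟩ := hp
  refine ⟨hpath.reverse, by rwa [Walk.length_reverse], hv, hu, fun x hx hxS => ?_⟩
  rw [Walk.support_reverse, List.mem_reverse] at hx
  exact (hint x hx hxS).symm

lemma IsAPath.append {u x y : V} {p : G.Walk x u} {q : G.Walk u y} (hp : p.IsPath)
    (hq : q.IsPath) (hpq : ∀ v ∈ p.support, v ∈ q.support → v = u) (hx : x ∈ S) (hy : y ∈ S)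
    (hxy : x ≠ y) (hpS : ∀ v ∈ p.support, v ∈ S → v = x) (hqS : ∀ v ∈ q.support, v ∈ S → v = y) :
    IsAPath S (p.append q) := by
  refine ⟨hp.append hq hpq, ?_, hx, hy, fun v hv hvS => ?_⟩
  · exact Nat.one_le_iff_ne_zero.mpr fun h => hxy (Walk.eq_of_length_eq_zero h)
  · rcases (Walk.mem_support_append_iff p q).mp hv with hv | hv
    · exact .inl (hpS v hv hvS)
    · exact .inr (hqS v hv hvS)

lemma IsAPath.eq_start_of_mem_left {c u d : V} {X : G.Walk c u} {Y : G.Walk u d}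
    (h : IsAPath S (X.append Y)) (hu : u ∉ S) : ∀ v ∈ X.support, v ∈ S → v = c := by
  intro v hv hvS
  refine (h.2.2.2.2 v (Walk.support_subset_support_append_left X Y hv) hvS).resolve_right ?_
  rintro rfl
  exact h.1.ne_of_mem_support_of_append (fun hdu => hu (hdu ▸ hvS)) hv (Walk.end_mem_support Y) rfl

end SPaths

namespace SimpleGraph.Walk

variable {V : Type} {G : SimpleGraph V}

open Classical in
noncomputable def countEdgesNotIn (E : Set (Sym2 V)) {u v : V} (p : G.Walk u v) : ℕ :=
  p.edges.countP (· ∉ E)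

variable (E : Set (Sym2 V))

lemma countEdgesNotIn_append {u v w : V} (p : G.Walk u v) (q : G.Walk v w) :
    (p.append q).countEdgesNotIn E = p.countEdgesNotIn E + q.countEdgesNotIn E := by
  simp [countEdgesNotIn, edges_append, List.countP_append]

lemma countEdgesNotIn_reverse {u v : V} (p : G.Walk u v) :
    p.reverse.countEdgesNotIn E = p.countEdgesNotIn E := by
  simp [countEdgesNotIn, edges_reverse, List.countP_reverse]

lemma countEdgesNotIn_eq_zero_iff {u v : V} (p : G.Walk u v) :
    p.countEdgesNotIn E = 0 ↔ ∀ e ∈ p.edges, e ∈ E := by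
  simp [countEdgesNotIn, List.countP_eq_zero]

end SimpleGraph.Walk

section Families

variable {V : Type} {G : SimpleGraph V} {ι κ : Type*}

def familySupport (P : κ → Σ u v : V, G.Walk u v) : Set V :=
  {x | ∃ j, x ∈ (P j).2.2.support}

def familyEdges (P : κ → Σ u v : V, G.Walk u v) : Set (Sym2 V) :=
  {e | ∃ j, e ∈ (P j).2.2.edges}

structure IsSPathFamily (S : Set V) (P : κ → Σ u v : V, G.Walk u v) : Prop where
  isAPath : ∀ j, IsAPath S (P j).2.2
  pairwise_disjoint : Pairwise fun i j => (P i).2.2.support.Disjoint (P j).2.2.support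

lemma mem_support_of_edges_mem_familyEdges {P : κ → Σ u v : V, G.Walk u v}
    (hP : Pairwise fun i j => (P i).2.2.support.Disjoint (P j).2.2.support) {j : κ} :
    ∀ {x y : V} (w : G.Walk x y), (∀ e ∈ w.edges, e ∈ familyEdges P) →
      x ∈ (P j).2.2.support → y ∈ (P j).2.2.support
  | _, _, .nil, _, hx => hx
  | x, _, .cons h w, hw, hx => by
    obtain ⟨j', hj'⟩ := hw _ List.mem_cons_self
    have hjj' : j' = j := by
      by_contra hne
      exact hP hne ((P j').2.2.fst_mem_support_of_mem_edges hj') hx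
    subst hjj'
    exact mem_support_of_edges_mem_familyEdges hP w (fun e he => hw e (List.mem_cons_of_mem _ he))
      ((P j').2.2.snd_mem_support_of_mem_edges hj')

lemma IsSPathFamily.update [DecidableEq κ] {S : Set V} {P : κ → Σ u v : V, G.Walk u v}
    (hP : IsSPathFamily S P) (j₀ : κ) {x y : V} {w : G.Walk x y} (hw : IsAPath S w)
    (hdisj : ∀ j ≠ j₀, w.support.Disjoint (P j).2.2.support) :
    IsSPathFamily S (Function.update P j₀ ⟨x, y, w⟩) := by
  refine ⟨fun j => ?_, fun i j hij => ?_⟩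
  · rcases eq_or_ne j j₀ with rfl | hj
    · rw [Function.update_self]
      exact hw
    · rw [Function.update_of_ne hj]
      exact hP.isAPath j
  · rcases eq_or_ne i j₀ with rfl | hi
    · rw [Function.update_self, Function.update_of_ne hij.symm]
      exact hdisj j hij.symm
    · rcases eq_or_ne j j₀ with rfl | hj
      · rw [Function.update_self, Function.update_of_ne hi]
        exact (hdisj i hi).symm
      · rw [Function.update_of_ne hi, Function.update_of_ne hj]
        exact hP.pairwise_disjoint hij

end Families

lemma Finset.sum_comp_update_lt {κ α : Type*} [Fintype κ] [DecidableEq κ] (f : κ → α)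
    (g : α → ℕ) {j₀ : κ} {x : α} (h : g x < g (f j₀)) :
    ∑ j, g (Function.update f j₀ x j) < ∑ j, g (f j) := by
  refine Finset.sum_lt_sum (fun j _ => ?_) ⟨j₀, Finset.mem_univ _, by simpa using h⟩
  rcases eq_or_ne j j₀ with rfl | hj
  · simpa using h.le
  · simp [hj]

section Rerouting

variable {V : Type} {G : SimpleGraph V} {ι κ : Type*} {S : Set V}

lemma IsAPath.exists_reverse_prefix_first_hit [DecidableEq V] {a b : V} {q : G.Walk a b}
    (hq : IsAPath S q) {T : Set V} (hmeet : ∃ x ∈ q.support, x ∈ T) (hb : b ∉ T) :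
    ∃ u ∈ T, u ∈ q.support ∧ ∃ π : G.Walk u a, π.IsPath ∧ (∀ e ∈ π.edges, e ∈ q.edges) ∧
      (∀ v ∈ π.support, v ∈ S → v = a) ∧ ∀ v ∈ π.support, v ∈ T → v = u := by
  obtain ⟨u, hu, huT, hfirst⟩ := q.exists_takeUntil_first hmeet
  have hbu : b ≠ u := fun h => hb (h ▸ huT)
  refine ⟨u, huT, hu, (q.takeUntil u hu).reverse, (hq.1.takeUntil hu).reverse, fun e he => ?_,
    fun v hv hvS => ?_, fun v hv hvT => ?_⟩
  · rw [Walk.edges_reverse, List.mem_reverse] at he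
    exact q.edges_takeUntil_subset_edges hu he
  · rw [Walk.support_reverse, List.mem_reverse] at hv
    refine (hq.2.2.2.2 v (q.support_takeUntil_subset_support hu hv) hvS).resolve_right ?_
    rintro rfl
    exact Walk.endpoint_notMem_support_takeUntil hq.1 hu hbu hv
  · rw [Walk.support_reverse, List.mem_reverse] at hv
    exact hfirst v hv hvT

lemma IsSPathFamily.update_reroute [DecidableEq κ] {P : κ → Σ u v : V, G.Walk u v}
    (hP : IsSPathFamily S P) {j₀ : κ} {c u d a : V} {X : G.Walk c u} {Y : G.Walk u d}
    (hr : IsAPath S (X.append Y)) (hrP : ∀ v ∈ (X.append Y).support, v ∈ (P j₀).2.2.support)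
    (huS : u ∉ S) {π : G.Walk u a} (hπ : π.IsPath) (hπS : ∀ v ∈ π.support, v ∈ S → v = a)
    (hπP : ∀ v ∈ π.support, v ∈ familySupport P → v = u) (ha : a ∈ S)
    (haP : a ∉ familySupport P) :
    IsSPathFamily S (Function.update P j₀ ⟨c, a, X.append π⟩) := by
  have hX : ∀ v ∈ X.support, v ∈ (P j₀).2.2.support :=
    fun v hv => hrP v (Walk.support_subset_support_append_left X Y hv)
  have hc : c ∈ familySupport P := ⟨j₀, hX c X.start_mem_support⟩
  refine hP.update j₀ (IsAPath.append hr.1.of_append_left hπ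
    (fun v hv hvπ => hπP v hvπ ⟨j₀, hX v hv⟩) hr.2.2.1 ha (ne_of_mem_of_not_mem hc haP)
    (hr.eq_start_of_mem_left huS) hπS) fun j hj v hv hvj => ?_
  rcases (Walk.mem_support_append_iff X π).mp hv with hv | hv
  · exact hP.pairwise_disjoint hj hvj (hX v hv)
  · obtain rfl := hπP v hv ⟨j, hvj⟩
    exact hP.pairwise_disjoint hj hvj (hX v X.end_mem_support)

variable {Q : ι → Σ u v : V, G.Walk u v} {P : κ → Σ u v : V, G.Walk u v}

theorem IsSPathFamily.exists_lt_of_meets [Fintype κ] {Γ : Type} [Group Γ] {γ : V → V → Γ}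
    (hγ : IsLab G γ) (hQ : IsSPathFamily S Q) (hP : IsSPathFamily S P)
    (hPγ : ∀ j, walkVal γ (P j).2.2 ≠ 1) {i₀ : ι}
    (hmeet : ∃ x ∈ (Q i₀).2.2.support, x ∈ familySupport P)
    (hA : (Q i₀).1 ∉ familySupport P) (hB : (Q i₀).2.1 ∉ familySupport P) :
    ∃ P' : κ → Σ u v : V, G.Walk u v, IsSPathFamily S P' ∧ (∀ j, walkVal γ (P' j).2.2 ≠ 1) ∧
      ∑ j, (P' j).2.2.countEdgesNotIn (familyEdges Q) <
        ∑ j, (P j).2.2.countEdgesNotIn (familyEdges Q) := by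
  classical
  set E := familyEdges Q
  have hSQ : ∀ x ∈ familySupport P, x ∈ S → x ∉ (Q i₀).2.2.support := fun x hx hxS hxQ =>
    ((hQ.isAPath i₀).2.2.2.2 x hxQ hxS).elim (fun h => hA (h ▸ hx)) (fun h => hB (h ▸ hx))
  obtain ⟨u, ⟨j₀, huP⟩, hu, π, hπ, hπQ, hπS, hπP⟩ :=
    (hQ.isAPath i₀).exists_reverse_prefix_first_hit hmeet hB
  have huS : u ∉ S := fun h => hSQ u ⟨j₀, huP⟩ h hu
  have hπE : π.countEdgesNotIn E = 0 :=
    (Walk.countEdgesNotIn_eq_zero_iff _ _).mpr fun e he => ⟨i₀, hπQ e he⟩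
  have hleave : ∀ {d : V} (Y : G.Walk u d), d ∈ familySupport P → d ∈ S →
      Y.countEdgesNotIn E ≠ 0 := fun Y hdP hdS h =>
    hSQ _ hdP hdS (mem_support_of_edges_mem_familyEdges hQ.pairwise_disjoint Y
      ((Walk.countEdgesNotIn_eq_zero_iff _ _).mp h) hu)
  have reroute : ∀ {c d : V} (X : G.Walk c u) (Y : G.Walk u d), IsAPath S (X.append Y) →
      (∀ v ∈ (X.append Y).support, v ∈ (P j₀).2.2.support) →
      (X.append Y).countEdgesNotIn E = (P j₀).2.2.countEdgesNotIn E →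
      walkVal γ (X.append π) ≠ 1 →
      ∃ P' : κ → Σ u v : V, G.Walk u v, IsSPathFamily S P' ∧
        (∀ j, walkVal γ (P' j).2.2 ≠ 1) ∧
        ∑ j, (P' j).2.2.countEdgesNotIn E < ∑ j, (P j).2.2.countEdgesNotIn E := by
    intro c d X Y hr hrP hrE hval
    have hY := hleave Y ⟨j₀, hrP d (Walk.end_mem_support _)⟩ hr.2.2.2.1
    refine ⟨_, hP.update_reroute hr hrP huS hπ hπS hπP (hQ.isAPath i₀).2.2.1 hA,
      (Function.forall_update_iff P fun _ w => walkVal γ w.2.2 ≠ 1).mpr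
        ⟨hval, fun j _ => hPγ j⟩,
      Finset.sum_comp_update_lt P (fun w => w.2.2.countEdgesNotIn E) ?_⟩
    simp only [← hrE, Walk.countEdgesNotIn_append, hπE]
    omega
  obtain ⟨X, Y, hXY⟩ := Walk.mem_support_iff_exists_append.mp huP
  rcases walkVal_append_ne_one_or hγ X Y π (hXY ▸ hPγ j₀) with h | h
  · exact reroute X Y (hXY ▸ hP.isAPath j₀) (fun v hv => hXY ▸ hv) (by rw [hXY]) h
  · refine reroute Y.reverse X.reverse ?_ (fun v hv => ?_) ?_ h <;>
      rw [← Walk.reverse_append] at *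
    · exact hXY ▸ (hP.isAPath j₀).reverse
    · rw [Walk.support_reverse, List.mem_reverse] at hv
      exact hXY ▸ hv
    · rw [Walk.countEdgesNotIn_reverse, hXY]

end Rerouting

section Selection

variable {V : Type} {G : SimpleGraph V} {ι κ : Type*} {S : Set V}
  {Q : ι → Σ u v : V, G.Walk u v} {P : κ → Σ u v : V, G.Walk u v}

theorem IsSPathFamily.exists_endpoint_mem_of_meets [Fintype κ] {Γ : Type} [Group Γ]
    {γ : V → V → Γ} (hγ : IsLab G γ) (hQ : IsSPathFamily S Q) (hP : IsSPathFamily S P)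
    (hPγ : ∀ j, walkVal γ (P j).2.2 ≠ 1) :
    ∃ P' : κ → Σ u v : V, G.Walk u v, IsSPathFamily S P' ∧ (∀ j, walkVal γ (P' j).2.2 ≠ 1) ∧
      ∀ i, (∃ x ∈ (Q i).2.2.support, x ∈ familySupport P') →
        (Q i).1 ∈ familySupport P' ∨ (Q i).2.1 ∈ familySupport P' := by
  obtain ⟨P', ⟨hP', hP'γ⟩, hmin⟩ := (measure fun P' : κ → Σ u v : V, G.Walk u v =>
      ∑ j, (P' j).2.2.countEdgesNotIn (familyEdges Q)).wf.has_min
    {P' | IsSPathFamily S P' ∧ ∀ j, walkVal γ (P' j).2.2 ≠ 1} ⟨P, hP, hPγ⟩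
  refine ⟨P', hP', hP'γ, fun i hi => ?_⟩
  by_contra! h
  obtain ⟨P'', hP'', hP''γ, hlt⟩ := IsSPathFamily.exists_lt_of_meets hγ hQ hP' hP'γ hi h.1 h.2
  exact hmin P'' ⟨hP'', hP''γ⟩ hlt

lemma card_le_two_mul_card_of_forall_exists_endpoint [Fintype ι] [Fintype κ]
    (hQ : Pairwise fun i j => (Q i).2.2.support.Disjoint (Q j).2.2.support)
    (h : ∀ i, ∃ j, (P j).1 ∈ (Q i).2.2.support ∨ (P j).2.1 ∈ (Q i).2.2.support) :
    Fintype.card ι ≤ 2 * Fintype.card κ := by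
  let endpoint : κ × Bool → V := fun jb => bif jb.2 then (P jb.1).1 else (P jb.1).2.1
  have h' : ∀ i, ∃ jb, endpoint jb ∈ (Q i).2.2.support := fun i => by
    obtain ⟨j, hj | hj⟩ := h i
    exacts [⟨(j, true), hj⟩, ⟨(j, false), hj⟩]
  choose f hf using h'
  have hinj : Function.Injective f := fun i i' hii' => by
    by_contra hne
    exact hQ hne (hf i) (hii' ▸ hf i')
  simpa [mul_comm] using Fintype.card_le_of_injective f hinj

lemma IsSPathFamily.exists_embedding_forall_notMem_familySupport [Fintype ι] [Fintype κ]
    (hQ : IsSPathFamily S Q) (hP : ∀ j, IsAPath S (P j).2.2)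
    (h : ∀ i, (∃ x ∈ (Q i).2.2.support, x ∈ familySupport P) →
      (Q i).1 ∈ familySupport P ∨ (Q i).2.1 ∈ familySupport P)
    {m : ℕ} (hm : m + 2 * Fintype.card κ ≤ Fintype.card ι) :
    ∃ e : Fin m ↪ ι, ∀ k, ∀ x ∈ (Q (e k)).2.2.support, x ∉ familySupport P := by
  classical
  let Meets (i : ι) : Prop := ∃ x ∈ (Q i).2.2.support, x ∈ familySupport P
  have hendpoint : ∀ i, ∀ x ∈ (Q i).2.2.support, x ∈ S → x ∈ familySupport P →
      ∃ j, (P j).1 ∈ (Q i).2.2.support ∨ (P j).2.1 ∈ (Q i).2.2.support := by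
    rintro i x hx hxS ⟨j, hj⟩
    rcases (hP j).2.2.2.2 x hj hxS with rfl | rfl
    exacts [⟨j, .inl hx⟩, ⟨j, .inr hx⟩]
  have hmeets : Fintype.card {i // Meets i} ≤ 2 * Fintype.card κ :=
    card_le_two_mul_card_of_forall_exists_endpoint (Q := fun i : {i // Meets i} => Q i)
      (hQ.pairwise_disjoint.comp_of_injective Subtype.val_injective) fun i =>
        (h i i.2).elim (hendpoint i _ (Walk.start_mem_support _) (hQ.isAPath i).2.2.1)
          (hendpoint i _ (Walk.end_mem_support _) (hQ.isAPath i).2.2.2.1)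
  obtain ⟨e⟩ := Function.Embedding.nonempty_of_card_le (α := Fin m) (β := {i // ¬ Meets i})
    (by rw [Fintype.card_fin, Fintype.card_subtype_compl]; omega)
  exact ⟨e.trans (Function.Embedding.subtype _), fun k x hx hxP => (e k).2 ⟨x, hx, hxP⟩⟩

lemma IsSPathFamily.comp {ι' : Type*} (hP : IsSPathFamily S P) {f : ι' → κ}
    (hf : Function.Injective f) : IsSPathFamily S (P ∘ f) :=
  ⟨fun i => hP.isAPath (f i), hP.pairwise_disjoint.comp_of_injective hf⟩

lemma IsSPathFamily.append {m n : ℕ} {P₁ : Fin m → Σ u v : V, G.Walk u v}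
    {P₂ : Fin n → Σ u v : V, G.Walk u v} (h₁ : IsSPathFamily S P₁) (h₂ : IsSPathFamily S P₂)
    (h₁₂ : ∀ i j, (P₁ i).2.2.support.Disjoint (P₂ j).2.2.support) :
    IsSPathFamily S (Fin.append P₁ P₂) := by
  refine ⟨fun i => ?_, fun i j hij => ?_⟩
  · induction i using Fin.addCases
    · rw [Fin.append_left]; exact h₁.isAPath _
    · rw [Fin.append_right]; exact h₂.isAPath _
  induction i using Fin.addCases <;> induction j using Fin.addCases
  · rw [Fin.append_left, Fin.append_left]
    exact h₁.pairwise_disjoint fun h => hij (congrArg _ h)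
  · rw [Fin.append_left, Fin.append_right]
    exact h₁₂ _ _
  · rw [Fin.append_right, Fin.append_left]
    exact (h₁₂ _ _).symm
  · rw [Fin.append_right, Fin.append_right]
    exact h₂.pairwise_disjoint fun h => hij (congrArg _ h)

end Selection

theorem mixed_nonzero_S_paths_general
    {V Γ₁ Γ₂ : Type} [Group Γ₁] [Group Γ₂] (G : SimpleGraph V)
    (γ : V → V → Γ₁ × Γ₂) (hγ : IsLab G γ) (S : Set V) (t : ℕ)
    (h₁ : ∃ (a b : Fin (3 * t) → V) (p : ∀ i, G.Walk (a i) (b i)),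
        (∀ i, IsAPath S (p i)) ∧
        (∀ i, walkVal (fun x y => (γ x y).1) (p i) ≠ 1) ∧
        (∀ i j, i ≠ j → ∀ v : V, v ∈ (p i).support → v ∉ (p j).support))
    (h₂ : ∃ (a b : Fin t → V) (p : ∀ i, G.Walk (a i) (b i)),
        (∀ i, IsAPath S (p i)) ∧
        (∀ i, walkVal (fun x y => (γ x y).2) (p i) ≠ 1) ∧
        (∀ i j, i ≠ j → ∀ v : V, v ∈ (p i).support → v ∉ (p j).support)) :
    ∃ (a b : Fin (2 * t) → V) (p : ∀ i, G.Walk (a i) (b i)),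
      (∀ i, IsAPath S (p i)) ∧
      (∀ i j, i ≠ j → ∀ v : V, v ∈ (p i).support → v ∉ (p j).support) ∧
      (∀ i : Fin (2 * t), (i : ℕ) < t → walkVal (fun x y => (γ x y).1) (p i) ≠ 1) ∧
      (∀ i : Fin (2 * t), t ≤ (i : ℕ) → walkVal (fun x y => (γ x y).2) (p i) ≠ 1) := by
  obtain ⟨A, B, Q, hQS, hQγ, hQd⟩ := h₁
  obtain ⟨c, d, P, hPS, hPγ, hPd⟩ := h₂
  have hQ : IsSPathFamily S fun i => (⟨A i, B i, Q i⟩ : Σ u v : V, G.Walk u v) :=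
    ⟨hQS, fun i j hij v => hQd i j hij v⟩
  have hP : IsSPathFamily S fun j => (⟨c j, d j, P j⟩ : Σ u v : V, G.Walk u v) :=
    ⟨hPS, fun i j hij v => hPd i j hij v⟩
  obtain ⟨P', hP', hP'γ, hends⟩ := hQ.exists_endpoint_mem_of_meets hγ.snd hP hPγ
  obtain ⟨e, he⟩ := hQ.exists_embedding_forall_notMem_familySupport hP'.isAPath hends
    (m := t) (by simp only [Fintype.card_fin]; omega)
  set F := Fin.append (fun k => (⟨A (e k), B (e k), Q (e k)⟩ : Σ u v : V, G.Walk u v)) P'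
    with hFdef
  have hF : IsSPathFamily S F :=
    (hQ.comp e.injective).append hP' fun k j v hv hvj => he k v hv ⟨j, hvj⟩
  have hF₁ : ∀ i : Fin (t + t), (i : ℕ) < t → walkVal (fun x y => (γ x y).1) (F i).2.2 ≠ 1 := by
    refine Fin.addCases (fun k _ => ?_) fun k hk => absurd hk (by simp)
    rw [hFdef, Fin.append_left]
    exact hQγ (e k)
  have hF₂ : ∀ i : Fin (t + t), t ≤ (i : ℕ) → walkVal (fun x y => (γ x y).2) (F i).2.2 ≠ 1 := by
    refine Fin.addCases (fun k hk => absurd hk (by simp)) fun k _ => ?_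
    rw [hFdef, Fin.append_right]
    exact hP'γ k
  exact ⟨fun i => (F (i.cast (two_mul t))).1, fun i => (F (i.cast (two_mul t))).2.1,
    fun i => (F (i.cast (two_mul t))).2.2, fun i => hF.isAPath _,
    fun i j hij v => hF.pairwise_disjoint ((Fin.cast_injective _).ne hij) (a := v),
    fun i => hF₁ (i.cast _), fun i => hF₂ (i.cast _)⟩

/-- Lemma 17: given `3t` disjoint `Γ₁`-non-zero `S`-paths and `t` disjoint `Γ₂`-non-zero
`S`-paths, there are `2t` disjoint `S`-paths, the first `t` being `Γ₁`-non-zero and the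
remaining `t` being `Γ₂`-non-zero. -/
theorem mixed_nonzero_S_paths
    {V Γ₁ Γ₂ : Type} [Group Γ₁] [Group Γ₂] (G : SimpleGraph V)
    (γ : V → V → Γ₁ × Γ₂) (hγ : IsLab G γ) (S : Set V) (t : ℕ) (ht : 0 < t)
    (h₁ : ∃ (a b : Fin (3 * t) → V) (p : ∀ i, G.Walk (a i) (b i)),
        (∀ i, IsAPath S (p i)) ∧
        (∀ i, walkVal (fun x y => (γ x y).1) (p i) ≠ 1) ∧
        (∀ i j, i ≠ j → ∀ v : V, v ∈ (p i).support → v ∉ (p j).support))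
    (h₂ : ∃ (a b : Fin t → V) (p : ∀ i, G.Walk (a i) (b i)),
        (∀ i, IsAPath S (p i)) ∧
        (∀ i, walkVal (fun x y => (γ x y).2) (p i) ≠ 1) ∧
        (∀ i j, i ≠ j → ∀ v : V, v ∈ (p i).support → v ∉ (p j).support)) :
    ∃ (a b : Fin (2 * t) → V) (p : ∀ i, G.Walk (a i) (b i)),
      (∀ i, IsAPath S (p i)) ∧
      (∀ i j, i ≠ j → ∀ v : V, v ∈ (p i).support → v ∉ (p j).support) ∧
      (∀ i : Fin (2 * t), (i : ℕ) < t → walkVal (fun x y => (γ x y).1) (p i) ≠ 1) ∧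
      (∀ i : Fin (2 * t), t ≤ (i : ℕ) → walkVal (fun x y => (γ x y).2) (p i) ≠ 1) :=
  mixed_nonzero_S_paths_general G γ hγ S t h₁ h₂
end

section
/- For all positive integers r and s, every family of r·s intervals [a,b] (with a ≤ b) in a linearly ordered set contains r pairwise disjoint intervals or s pairwise intersecting intervals. -/
/-!
Let `i₀` be an interval with the leftmost right endpoint `b`. Every interval starting at or
before `b` contains `b`, so these intervals pairwise intersect; if there are fewer than `s`
of them, the others all start after `b`, are disjoint from `i₀`, and number more than
`(r - 1) s`, so induction on `r` finds `r - 1` pairwise disjoint ones among them (or `s`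
pairwise intersecting ones), to which `i₀` can be added.
-/

open Set

theorem exists_pairwiseDisjoint_or_pairwise_intersecting_Icc
    {ι L : Type*} [LinearOrder L] (F : ι → L × L) (hF : ∀ i, (F i).1 ≤ (F i).2) (s : ℕ) :
    ∀ (r : ℕ) (S : Finset ι), r * s ≤ S.card →
      (∃ I ⊆ S, I.card = r ∧ (I : Set ι).PairwiseDisjoint fun i => Icc (F i).1 (F i).2) ∨
      (∃ I ⊆ S, I.card = s ∧
        (I : Set ι).Pairwise fun i j => (Icc (F i).1 (F i).2 ∩ Icc (F j).1 (F j).2).Nonempty)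
  | 0, _, _ => Or.inl ⟨∅, Finset.empty_subset _, rfl, by simp⟩
  | r + 1, S, hS => by
    classical
    by_cases hs : s = 0
    · exact Or.inr ⟨∅, Finset.empty_subset _, hs ▸ rfl, by simp⟩
    obtain ⟨i₀, hi₀S, hi₀⟩ := S.exists_min_image (fun i => (F i).2) <|
      Finset.card_pos.1 (by nlinarith [Nat.pos_of_ne_zero hs])
    set b := (F i₀).2
    have hb_mem : ∀ j ∈ S.filter fun j => (F j).1 ≤ b, b ∈ Icc (F j).1 (F j).2 :=
      fun j hj => ⟨(Finset.mem_filter.1 hj).2, hi₀ j (Finset.mem_filter.1 hj).1⟩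
    by_cases hs_le : s ≤ (S.filter fun j => (F j).1 ≤ b).card
    · obtain ⟨I, hIb, hI⟩ := Finset.exists_subset_card_eq hs_le
      exact Or.inr ⟨I, hIb.trans (Finset.filter_subset _ _), hI,
        fun i hi j hj _ => ⟨b, hb_mem i (hIb hi), hb_mem j (hIb hj)⟩⟩
    have hcard : r * s ≤ (S.filter fun j => ¬(F j).1 ≤ b).card := by
      have := Finset.card_filter_add_card_filter_not (s := S) fun j => (F j).1 ≤ b
      rw [Nat.succ_mul] at hS
      omega
    rcases exists_pairwiseDisjoint_or_pairwise_intersecting_Icc F hF s r _ hcard with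
      ⟨I, hIU, hI, hdisj⟩ | ⟨I, hIU, hI, hinter⟩
    · have hi₀I : i₀ ∉ I := fun h => (Finset.mem_filter.1 (hIU h)).2 (hF i₀)
      refine Or.inl ⟨insert i₀ I,
        Finset.insert_subset hi₀S (hIU.trans (Finset.filter_subset _ _)),
        by rw [Finset.card_insert_of_notMem hi₀I, hI], ?_⟩
      rw [Finset.coe_insert]
      refine hdisj.insert fun j hj _ => Set.disjoint_left.2 fun x hx₀ hxj => ?_
      exact (Finset.mem_filter.1 (hIU hj)).2 (hxj.1.trans hx₀.2)
    · exact Or.inr ⟨I, hIU.trans (Finset.filter_subset _ _), hI, hinter⟩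

theorem intervals_disjoint_or_intersecting_general
    {L : Type} [LinearOrder L] (r s : ℕ)
    (F : Fin (r * s) → L × L) (hF : ∀ i, (F i).1 ≤ (F i).2) :
    (∃ I : Finset (Fin (r * s)), I.card = r ∧ ∀ i ∈ I, ∀ j ∈ I, i ≠ j →
        Set.Icc (F i).1 (F i).2 ∩ Set.Icc (F j).1 (F j).2 = ∅) ∨
    (∃ I : Finset (Fin (r * s)), I.card = s ∧ ∀ i ∈ I, ∀ j ∈ I, i ≠ j →
        (Set.Icc (F i).1 (F i).2 ∩ Set.Icc (F j).1 (F j).2).Nonempty) := by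
  rcases exists_pairwiseDisjoint_or_pairwise_intersecting_Icc F hF s r
      Finset.univ (by simp) with ⟨I, -, hI, hdisj⟩ | ⟨I, -, hI, hinter⟩
  · exact Or.inl ⟨I, hI, fun i hi j hj hij => disjoint_iff_inter_eq_empty.1 (hdisj hi hj hij)⟩
  · exact Or.inr ⟨I, hI, fun i hi j hj hij => hinter hi hj hij⟩

/-- Dilworth-type statement for intervals: every family of `r * s` intervals in a linear
order contains `r` pairwise disjoint intervals or `s` pairwise intersecting intervals. -/
theorem intervals_disjoint_or_intersecting
    {L : Type} [LinearOrder L] (r s : ℕ) (hr : 0 < r) (hs : 0 < s)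
    (F : Fin (r * s) → L × L) (hF : ∀ i, (F i).1 ≤ (F i).2) :
    (∃ I : Finset (Fin (r * s)), I.card = r ∧ ∀ i ∈ I, ∀ j ∈ I, i ≠ j →
        Set.Icc (F i).1 (F i).2 ∩ Set.Icc (F j).1 (F j).2 = ∅) ∨
    (∃ I : Finset (Fin (r * s)), I.card = s ∧ ∀ i ∈ I, ∀ j ∈ I, i ≠ j →
        (Set.Icc (F i).1 (F i).2 ∩ Set.Icc (F j).1 (F j).2).Nonempty) :=
  intervals_disjoint_or_intersecting_general r s F hF
end
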